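/- arXiv:0906.2215 — 2 statements merged into one kernel-verified Lean document; each statement's English description precedes it below -/
import Mathlib

section
/- For every positive integer k, the identity (Λ_4 − 1)(Λ_{2(4k+1)} − 1)(Λ_{4k+3} − 1)((1/2)Λ_{4k+3} − 1) = (2Λ_{4(4k+1)} − Λ_4 − Λ_{2(4k+1)} + 1)(2k·Λ_{4k+3} + 1) holds in the group algebra ℚ[ℂˣ]. -/
/-- `Λ n` : the element of the group algebra `ℚ[ℂˣ]` given by the sum of the
basis elements corresponding to the `n`-th roots of unity (junk value `0` for `n = 0`). -/
noncomputable def Lambda (n : ℕ) : MonoidAlgebra ℚ ℂˣ :=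
  if h : n = 0 then 0 else
    haveI : NeZero n := ⟨h⟩
    haveI : Fintype (rootsOfUnity n ℂ) := Fintype.ofFinite _
    ∑ ζ : rootsOfUnity n ℂ, MonoidAlgebra.single (ζ : ℂˣ) (1 : ℚ)

/-! `Λ n` is the sum of the basis elements over the subgroup `μ n` of `n`-th roots of unity.
For finite subgroups `H`, `K` of a commutative group, multiplication `H × K → H ⊔ K` is onto
with every fibre a translate of `H ⊓ K`, so `(∑ H) * (∑ K) = |H ⊓ K| • ∑ (H ⊔ K)`. Since
`μ m ⊓ μ n = μ (gcd m n)` and, by counting, `μ m ⊔ μ n = μ (lcm m n)`, this gives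
`Λ m * Λ n = gcd m n • Λ (lcm m n)`; in particular `Λ 4 * Λ (2(4k+1)) = 2 Λ (4(4k+1))` and
`Λ (4k+3) ^ 2 = (4k+3) Λ (4k+3)`, and the identity is a computation in a commutative ring
using these two relations. -/

theorem MonoidHom.sum_comp_of_surjective {G H M : Type*} [Group G] [Group H] [Fintype G]
    [Fintype H] [AddCommMonoid M] {φ : G →* H} (hφ : Function.Surjective φ) (f : H → M) :
    ∑ g, f (φ g) = Nat.card φ.ker • ∑ h, f h := by
  classical
  rw [← Fintype.sum_fiberwise' φ, Finset.smul_sum]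
  refine Finset.sum_congr rfl fun h _ => ?_
  rw [Finset.sum_const, Finset.card_univ, ← Nat.card_eq_fintype_card,
    Nat.card_congr ((Equiv.subtypeEquivRight (by simp)).trans (fiberEquivKerOfSurjective hφ h))]

namespace Subgroup

variable {G : Type*} [CommGroup G] (H K : Subgroup G)

def mulSup : H × K →* ↥(H ⊔ K) :=
  (inclusion le_sup_left).comp (MonoidHom.fst H K) *
    (inclusion le_sup_right).comp (MonoidHom.snd H K)

theorem mulSup_surjective : Function.Surjective (mulSup H K) := by
  rintro ⟨x, hx⟩
  obtain ⟨y, z, rfl⟩ := mem_sup'.mp hx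
  exact ⟨(y, z), rfl⟩

def kerMulSupEquivInf : (mulSup H K).ker ≃ ↥(H ⊓ K) where
  toFun p := ⟨p.1.1, p.1.1.2, by
    have hp : (p.1.1 : G) * p.1.2 = 1 := congrArg Subtype.val p.2
    rw [eq_inv_of_mul_eq_one_left hp]
    exact K.inv_mem p.1.2.2⟩
  invFun x :=
    ⟨(⟨x, x.2.1⟩, ⟨(x : G)⁻¹, K.inv_mem x.2.2⟩), Subtype.ext (mul_inv_cancel (x : G))⟩
  left_inv p := by
    have hp : (p.1.1 : G) * p.1.2 = 1 := congrArg Subtype.val p.2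
    ext <;> simp [eq_inv_of_mul_eq_one_right hp]
  right_inv x := rfl

theorem card_sup_mul_card_inf :
    Nat.card ↥(H ⊔ K) * Nat.card ↥(H ⊓ K) = Nat.card H * Nat.card K := by
  rw [← Nat.card_prod H K, card_eq_card_quotient_mul_card_subgroup (mulSup H K).ker,
    Nat.card_congr (QuotientGroup.quotientKerEquivOfSurjective _ (mulSup_surjective H K)).toEquiv,
    Nat.card_congr (kerMulSupEquivInf H K)]

end Subgroup

namespace MonoidAlgebra

variable (k : Type*) {G : Type*} [Semiring k] [CommGroup G]

/-- Defined via `finsum`, so it is `0` for infinite `H`. -/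
noncomputable def subgroupSum (H : Subgroup G) : MonoidAlgebra k G :=
  ∑ᶠ h : H, single (h : G) 1

theorem subgroupSum_mul_subgroupSum (H K : Subgroup G) [Finite H] [Finite K] :
    subgroupSum k H * subgroupSum k K = Nat.card ↥(H ⊓ K) • subgroupSum k (H ⊔ K) := by
  have : Finite ↥(H ⊔ K) := Finite.of_surjective _ (Subgroup.mulSup_surjective H K)
  have := Fintype.ofFinite H
  have := Fintype.ofFinite K
  have := Fintype.ofFinite ↥(H ⊔ K)
  simp only [subgroupSum, finsum_eq_sum_of_fintype, Finset.sum_mul_sum, single_mul_single, one_mul]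
  rw [← Nat.card_congr (Subgroup.kerMulSupEquivInf H K),
    ← MonoidHom.sum_comp_of_surjective (Subgroup.mulSup_surjective H K), Fintype.sum_prod_type]
  rfl

end MonoidAlgebra

theorem Complex.rootsOfUnity_sup_rootsOfUnity {m n : ℕ} [NeZero m] [NeZero n] :
    rootsOfUnity m ℂ ⊔ rootsOfUnity n ℂ = rootsOfUnity (m.lcm n) ℂ := by
  have : NeZero (m.lcm n) := ⟨Nat.lcm_ne_zero (NeZero.ne m) (NeZero.ne n)⟩
  have : NeZero (m.gcd n) := ⟨Nat.gcd_ne_zero_left (NeZero.ne m)⟩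
  refine Subgroup.eq_of_le_of_card_ge (sup_le (rootsOfUnity_le_of_dvd (m.dvd_lcm_left n))
    (rootsOfUnity_le_of_dvd (m.dvd_lcm_right n))) (le_of_eq ?_)
  have h := Subgroup.card_sup_mul_card_inf (rootsOfUnity m ℂ) (rootsOfUnity n ℂ)
  rw [rootsOfUnity_inf_rootsOfUnity, card_rootsOfUnity, card_rootsOfUnity, card_rootsOfUnity,
    ← Nat.gcd_mul_lcm m n, mul_comm] at h
  rw [card_rootsOfUnity]
  exact (Nat.eq_of_mul_eq_mul_left (Nat.pos_of_neZero _) h).symm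

theorem Lambda_eq_subgroupSum {n : ℕ} (hn : n ≠ 0) :
    Lambda n = MonoidAlgebra.subgroupSum ℚ (rootsOfUnity n ℂ) := by
  have := NeZero.mk hn
  rw [Lambda, dif_neg hn, MonoidAlgebra.subgroupSum]
  convert (finsum_eq_sum_of_fintype _).symm

theorem Lambda_mul_Lambda {m n : ℕ} (hm : m ≠ 0) (hn : n ≠ 0) :
    Lambda m * Lambda n = m.gcd n • Lambda (m.lcm n) := by
  have := NeZero.mk hm
  have := NeZero.mk hn
  have := NeZero.mk (Nat.gcd_ne_zero_left (n := n) hm)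
  rw [Lambda_eq_subgroupSum hm, Lambda_eq_subgroupSum hn,
    Lambda_eq_subgroupSum (Nat.lcm_ne_zero hm hn), MonoidAlgebra.subgroupSum_mul_subgroupSum,
    rootsOfUnity_inf_rootsOfUnity, Complex.rootsOfUnity_sup_rootsOfUnity, Complex.card_rootsOfUnity]

theorem alexander_divisor_case_II_general (k : ℕ) :
    (Lambda 4 - 1) * (Lambda (2 * (4 * k + 1)) - 1) * (Lambda (4 * k + 3) - 1)
        * ((1 / 2 : ℚ) • Lambda (4 * k + 3) - 1) =
      ((2 : ℚ) • Lambda (4 * (4 * k + 1)) - Lambda 4 - Lambda (2 * (4 * k + 1)) + 1)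
        * ((2 * k : ℚ) • Lambda (4 * k + 3) + 1) := by
  have hgcd : Nat.gcd 4 (2 * (4 * k + 1)) = 2 := by
    have hodd : Nat.Coprime 2 (4 * k + 1) := Nat.coprime_two_left.mpr ⟨2 * k, by ring⟩
    exact (Nat.gcd_mul_left 2 2 (4 * k + 1)).trans (by rw [hodd.gcd_eq_one])
  have hlcm : Nat.lcm 4 (2 * (4 * k + 1)) = 4 * (4 * k + 1) := by
    rw [Nat.lcm, hgcd]
    omega
  have hab : Lambda 4 * Lambda (2 * (4 * k + 1)) = (2 : ℚ) • Lambda (4 * (4 * k + 1)) := by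
    rw [Lambda_mul_Lambda (by norm_num) (by omega), hgcd, hlcm, ← Nat.cast_smul_eq_nsmul ℚ,
      Nat.cast_ofNat]
  have hsq : Lambda (4 * k + 3) * Lambda (4 * k + 3) =
      ((4 * k + 3 : ℕ) : ℚ) • Lambda (4 * k + 3) := by
    rw [Lambda_mul_Lambda (by omega) (by omega), Nat.gcd_self, Nat.lcm_self, Nat.cast_smul_eq_nsmul]
  have hc : (Lambda (4 * k + 3) - 1) * ((1 / 2 : ℚ) • Lambda (4 * k + 3) - 1) =
      (2 * k : ℚ) • Lambda (4 * k + 3) + 1 := by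
    rw [sub_mul, mul_sub, mul_sub, mul_smul_comm, hsq, mul_one, one_mul, mul_one]
    push_cast
    module
  rw [mul_assoc, hc, ← hab]
  ring

theorem alexander_divisor_case_II (k : ℕ) (hk : 0 < k) :
    (Lambda 4 - 1) * (Lambda (2 * (4 * k + 1)) - 1) * (Lambda (4 * k + 3) - 1)
        * ((1 / 2 : ℚ) • Lambda (4 * k + 3) - 1) =
      ((2 : ℚ) • Lambda (4 * (4 * k + 1)) - Lambda 4 - Lambda (2 * (4 * k + 1)) + 1)
        * ((2 * k : ℚ) • Lambda (4 * k + 3) + 1) :=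
  alexander_divisor_case_II_general k
end

section
/- The coefficient of the identity element 1 ∈ ℂˣ in the product ((1/264)Λ_{1213} − 1)((1/157)Λ_{1213} − 1)((1/114)Λ_{1213} − 1)((1/73)Λ_{1213} − 1) ∈ ℚ[ℂˣ] equals 4. -/
open Finset MonoidAlgebra

namespace MonoidAlgebra

variable {k G : Type*} [Semiring k] [Group G] (H : Subgroup G) [Fintype H]

theorem sum_single_subgroup_mul_self :
    (∑ h : H, single (h : G) (1 : k)) * ∑ h : H, single (h : G) (1 : k) =
      Fintype.card H • ∑ h : H, single (h : G) (1 : k) := by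
  rw [sum_mul, ← card_univ, ← sum_const]
  refine sum_congr rfl fun g _ => ?_
  rw [mul_sum]
  exact Fintype.sum_equiv (Equiv.mulLeft g) _ _ fun h => by simp [single_mul_single]

theorem coeff_sum_single_subgroup_one :
    (∑ h : H, single (h : G) (1 : k)).coeff 1 = 1 := by
  classical
  simp [coeff_sum, Finsupp.single_apply]

end MonoidAlgebra

theorem IsIdempotentElem.prod_smul_sub_one {R A ι : Type*} [CommRing R] [CommRing A]
    [Algebra R A] {e : A} (he : IsIdempotentElem e) (s : Finset ι) (c : ι → R) :
    ∏ i ∈ s, (c i • e - 1) = (∏ i ∈ s, (c i - 1)) • e + (-1 : R) ^ #s • (1 - e) := by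
  classical
  induction s using Finset.induction_on with
  | empty => simp
  | insert i s hi ih =>
    rw [prod_insert hi, prod_insert hi, card_insert_of_notMem hi, ih]
    simp only [Algebra.smul_def, map_mul, map_sub, map_one, map_pow, map_neg]
    linear_combination
      (algebraMap R A (c i) * (algebraMap R A (∏ j ∈ s, (c j - 1)) - (-1) ^ #s)) * he.eq

noncomputable instance (n : ℕ) [NeZero n] : Fintype (rootsOfUnity n ℂ) := Fintype.ofFinite _

theorem Lambda_eq_sum (n : ℕ) [NeZero n] :
    Lambda n = ∑ ζ : rootsOfUnity n ℂ, single (ζ : ℂˣ) (1 : ℚ) := by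
  rw [Lambda, dif_neg (NeZero.ne n)]

theorem Lambda_mul_self (n : ℕ) [NeZero n] : Lambda n * Lambda n = (n : ℚ) • Lambda n := by
  rw [Lambda_eq_sum, sum_single_subgroup_mul_self, ← Nat.card_eq_fintype_card,
    Complex.card_rootsOfUnity, Nat.cast_smul_eq_nsmul]

theorem coeff_Lambda_one (n : ℕ) [NeZero n] : (Lambda n).coeff 1 = 1 := by
  rw [Lambda_eq_sum, coeff_sum_single_subgroup_one]

theorem isIdempotentElem_inv_smul_Lambda (n : ℕ) [NeZero n] :
    IsIdempotentElem ((n : ℚ)⁻¹ • Lambda n) := by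
  have hn : (n : ℚ) ≠ 0 := Nat.cast_ne_zero.mpr (NeZero.ne n)
  rw [IsIdempotentElem, smul_mul_smul_comm, Lambda_mul_self, smul_smul, mul_assoc,
    inv_mul_cancel₀ hn, mul_one]

theorem coeff_prod_smul_Lambda_sub_one {ι : Type*} (n : ℕ) [NeZero n] (s : Finset ι)
    (a : ι → ℚ) :
    (∏ i ∈ s, (a i • Lambda n - 1)).coeff 1 =
      (∏ i ∈ s, (n * a i - 1)) / n + (-1) ^ #s * (1 - 1 / n) := by
  have hn : (n : ℚ) ≠ 0 := Nat.cast_ne_zero.mpr (NeZero.ne n)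
  have hΛ (i : ι) : a i • Lambda n = (n * a i) • ((n : ℚ)⁻¹ • Lambda n) := by
    rw [smul_smul, mul_comm, inv_mul_cancel_left₀ hn]
  simp only [hΛ, (isIdempotentElem_inv_smul_Lambda n).prod_smul_sub_one, coeff_add, coeff_smul,
    coeff_sub, Finsupp.add_apply, Finsupp.smul_apply, Finsupp.sub_apply, coeff_one_one,
    coeff_Lambda_one, smul_eq_mul, mul_one]
  ring

theorem betti_number_deg_1213 :
    ((((1 / 264 : ℚ) • Lambda 1213 - 1) * ((1 / 157 : ℚ) • Lambda 1213 - 1)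
        * ((1 / 114 : ℚ) • Lambda 1213 - 1) * ((1 / 73 : ℚ) • Lambda 1213 - 1)
        : MonoidAlgebra ℚ ℂˣ)).coeff 1 = (4 : ℚ) := by
  have hcoeff := coeff_prod_smul_Lambda_sub_one 1213 univ ![1 / 264, 1 / 157, 1 / 114, 1 / 73]
  simp only [Fin.prod_univ_four, card_univ, Fintype.card_fin, Matrix.cons_val] at hcoeff
  rw [hcoeff]
  norm_num
end
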